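/- Fix a deterministic complete transition structure T with state set {1,...,n}, n ≥ 2. For F ⊆ {1,...,n}, let Moore(T,F) denote the least m+1 where m is the smallest integer such that ∼_m equals ∼_{m+1} in (T,F) (so Moore(T,F) ≤ n−1). Then the average of Moore(T,F) over all 2^n subsets F is at most ⌈5 log₂ n⌉ + n^5 · 2^{−⌈5 log₂ n⌉}, and hence is O(log n). -/

import Mathlib

def run {Q A : Type*} (δ : Q → A → Q) (p : Q) (u : List A) : Q := u.foldl δ p

def iEquiv {Q A : Type*} (δ : Q → A → Q) (F : Set Q) (i : ℕ) (p q : Q) : Prop :=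
  ∀ u : List A, u.length ≤ i → (run δ p u ∈ F ↔ run δ q u ∈ F)

/-- The number of iterations of the main loop of Moore's algorithm: `m + 1` where `m` is
the smallest integer such that the `m`-equivalence equals the `(m+1)`-equivalence. -/
noncomputable def mooreCount {Q A : Type*} (δ : Q → A → Q) (F : Set Q) : ℕ :=
  1 + sInf {m : ℕ | ∀ p q : Q, iEquiv δ F m p q ↔ iEquiv δ F (m + 1) p q}

section aux

variable {Q' A : Type*}

lemma run_append (δ : Q' → A → Q') (p : Q') (u v : List A) :
    run δ p (u ++ v) = run δ (run δ p u) v :=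
  List.foldl_append

lemma iEquiv_refl (δ : Q' → A → Q') (F : Set Q') (i : ℕ) (p : Q') : iEquiv δ F i p p :=
  fun _ _ => Iff.rfl

lemma iEquiv_symm (δ : Q' → A → Q') (F : Set Q') {i : ℕ} {p q : Q'}
    (h : iEquiv δ F i p q) : iEquiv δ F i q p := fun u hu => (h u hu).symm

lemma iEquiv_trans (δ : Q' → A → Q') (F : Set Q') {i : ℕ} {p q r : Q'}
    (h1 : iEquiv δ F i p q) (h2 : iEquiv δ F i q r) : iEquiv δ F i p r :=
  fun u hu => (h1 u hu).trans (h2 u hu)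

lemma iEquiv_mono (δ : Q' → A → Q') (F : Set Q') {i j : ℕ} (hij : i ≤ j) {p q : Q'}
    (h : iEquiv δ F j p q) : iEquiv δ F i p q := fun u hu => h u (hu.trans hij)

lemma moore_gt (δ : Q' → A → Q') (F : Set Q') {ℓ : ℕ} (hℓ : 1 ≤ ℓ)
    (h : ℓ < mooreCount δ F) :
    ∃ p q : Q', iEquiv δ F (ℓ - 1) p q ∧ ¬ iEquiv δ F ℓ p q := by
  by_contra hc
  push_neg at hc
  have hmem : (ℓ - 1) ∈ {m : ℕ | ∀ p q : Q', iEquiv δ F m p q ↔ iEquiv δ F (m + 1) p q} := by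
    intro p q
    constructor
    · intro h1
      have h2 := hc p q h1
      rwa [Nat.sub_add_cancel hℓ]
    · exact iEquiv_mono δ F (Nat.le_succ _)
  have hle := Nat.sInf_le hmem
  have : mooreCount δ F ≤ 1 + (ℓ - 1) := by
    unfold mooreCount
    omega
  omega

lemma moore_le {n : ℕ} {A : Type*} (δ : Fin n → A → Fin n) (F : Set (Fin n)) :
    mooreCount δ F ≤ 1 + n ^ 2 := by
  set N := n ^ 2 with hN
  have hNn : N = n * n := by rw [hN]; ring
  have key : ∃ m, m ≤ N ∧
      m ∈ {m : ℕ | ∀ p q : Fin n, iEquiv δ F m p q ↔ iEquiv δ F (m + 1) p q} := by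
    by_contra hc
    push_neg at hc
    have step : ∀ m, m ≤ N →
        {z : Fin n × Fin n | iEquiv δ F (m + 1) z.1 z.2}
          ⊂ {z : Fin n × Fin n | iEquiv δ F m z.1 z.2} := by
      intro m hm
      have hsub : {z : Fin n × Fin n | iEquiv δ F (m + 1) z.1 z.2}
          ⊆ {z : Fin n × Fin n | iEquiv δ F m z.1 z.2} :=
        fun z hz => iEquiv_mono δ F (Nat.le_succ m) hz
      have hne := hc m hm
      have hex : ∃ p q : Fin n, iEquiv δ F m p q ∧ ¬ iEquiv δ F (m + 1) p q := by
        by_contra h2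
        push_neg at h2
        exact hne fun p q => ⟨h2 p q, iEquiv_mono δ F (Nat.le_succ m)⟩
      obtain ⟨p, q, h1, h2⟩ := hex
      exact (Set.ssubset_iff_of_subset hsub).mpr ⟨(p, q), h1, h2⟩
    have chain : ∀ m, m ≤ N + 1 →
        {z : Fin n × Fin n | iEquiv δ F m z.1 z.2}.ncard + m ≤ N := by
      intro m
      induction m with
      | zero =>
        intro _
        have h1 : {z : Fin n × Fin n | iEquiv δ F 0 z.1 z.2}.ncard
            ≤ (Set.univ : Set (Fin n × Fin n)).ncard :=
          Set.ncard_le_ncard (Set.subset_univ _) Set.finite_univ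
        have h2 : (Set.univ : Set (Fin n × Fin n)).ncard = n * n := by
          simp [Set.ncard_univ, Nat.card_eq_fintype_card]
        rw [h2] at h1
        omega
      | succ m ih =>
        intro hm
        have h1 := step m (by omega)
        have h2 : {z : Fin n × Fin n | iEquiv δ F (m + 1) z.1 z.2}.ncard
            < {z : Fin n × Fin n | iEquiv δ F m z.1 z.2}.ncard :=
          Set.ncard_lt_ncard h1 (Set.toFinite _)
        have h3 := ih (by omega)
        omega
    have := chain (N + 1) le_rfl
    omega
  obtain ⟨m, hm, hmem⟩ := key
  have hle := Nat.sInf_le hmem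
  unfold mooreCount
  omega

lemma bad_card {n : ℕ} {A : Type*} (δ : Fin n → A → Fin n) (k : ℕ) (p q : Fin n)
    [DecidablePred fun F : Finset (Fin n) =>
        iEquiv δ (↑F) k p q ∧ ¬ iEquiv δ (↑F) (k + 1) p q] :
    ((Finset.univ.filter (fun F : Finset (Fin n) =>
        iEquiv δ (↑F) k p q ∧ ¬ iEquiv δ (↑F) (k + 1) p q)).card) * 2 ^ (k + 1) ≤ 2 ^ n := by
  set Bad := Finset.univ.filter (fun F : Finset (Fin n) =>
      iEquiv δ (↑F) k p q ∧ ¬ iEquiv δ (↑F) (k + 1) p q) with hBad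
  rcases Bad.eq_empty_or_nonempty with he | ⟨F₀, hF₀⟩
  · rw [he]; simp
  · have hF₀' := Finset.mem_filter.mp hF₀
    obtain ⟨hk0, hnk0⟩ := hF₀'.2
    unfold iEquiv at hnk0
    push_neg at hnk0
    obtain ⟨u, hulen, hu⟩ := hnk0
    have hu' : ¬ (run δ p u ∈ (↑F₀ : Set (Fin n)) ↔ run δ q u ∈ (↑F₀ : Set (Fin n))) := by
      tauto
    have hlen : u.length = k + 1 := by
      rcases Nat.lt_or_ge u.length (k + 1) with h | h
      · exact absurd (hk0 u (by omega)) hu'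
      · omega
    set Ps : ℕ → Fin n := fun i => run δ p (u.take i) with hPs
    set Qs : ℕ → Fin n := fun i => run δ q (u.take i) with hQs
    have factA : ∀ F : Finset (Fin n), iEquiv δ (↑F) k p q →
        ∀ i ≤ k, (Ps i ∈ F ↔ Qs i ∈ F) := by
      intro F hF i hi
      exact hF (u.take i) (by rw [List.length_take]; omega)
    have factB : ∀ j ≤ k + 1, ¬ iEquiv δ (↑F₀) (k + 1 - j) (Ps j) (Qs j) := by
      intro j hj h
      apply hu'
      have h1 : run δ (Ps j) (u.drop j) = run δ p u := by
        show run δ (run δ p (u.take j)) (u.drop j) = run δ p u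
        rw [← run_append, List.take_append_drop]
      have h2 : run δ (Qs j) (u.drop j) = run δ q u := by
        show run δ (run δ q (u.take j)) (u.drop j) = run δ q u
        rw [← run_append, List.take_append_drop]
      have h3 := h (u.drop j) (by rw [List.length_drop]; omega)
      rwa [h1, h2] at h3
    have factC : ∀ i j, i < j → j ≤ k + 1 → iEquiv δ (↑F₀) (k + 1 - j) (Ps i) (Qs i) := by
      intro i j hij hj w hw
      have h1 : run δ (Ps i) w = run δ p (u.take i ++ w) := (run_append δ p (u.take i) w).symm
      have h2 : run δ (Qs i) w = run δ q (u.take i ++ w) := (run_append δ q (u.take i) w).symm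
      rw [h1, h2]
      exact hk0 _ (by rw [List.length_append, List.length_take, hlen]; omega)
    set r : ℕ → Fin n → Fin n → Prop :=
      fun j x y => ∃ i, i < j ∧ x = Ps i ∧ y = Qs i with hr
    set E : ℕ → Setoid (Fin n) := fun j => Relation.EqvGen.setoid (r j) with hE
    have hEr : ∀ j (x y : Fin n), (E j).r x y ↔ Relation.EqvGen (r j) x y :=
      fun _ _ _ => Iff.rfl
    have factD : ∀ j, j ≤ k + 1 → ∀ x y : Fin n, Relation.EqvGen (r j) x y →
        iEquiv δ (↑F₀) (k + 1 - j) x y := by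
      intro j hj x y h
      induction h with
      | rel a b hab =>
        obtain ⟨i, hij, rfl, rfl⟩ := hab
        exact factC i j hij hj
      | refl a => exact iEquiv_refl δ _ _ a
      | symm a b _ ih => exact iEquiv_symm δ _ ih
      | trans a b c _ _ ih1 ih2 => exact iEquiv_trans δ _ ih1 ih2
    have factE : ∀ j, j ≤ k + 1 → Nat.card (Quotient (E j)) + j ≤ n := by
      intro j
      induction j with
      | zero =>
        intro _
        have h1 : Nat.card (Quotient (E 0)) ≤ Nat.card (Fin n) :=
          Nat.card_le_card_of_surjective (Quotient.mk (E 0)) (fun y => ⟨y.out, y.out_eq⟩)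
        simpa using h1
      | succ j ih =>
        intro hj
        have hmono : ∀ a b : Fin n, (E j).r a b →
            Quotient.mk (E (j + 1)) a = Quotient.mk (E (j + 1)) b := by
          intro a b hab
          have hab' : Relation.EqvGen (r j) a b := (hEr j a b).mp hab
          have hab'' : Relation.EqvGen (r (j + 1)) a b :=
            Relation.EqvGen.mono (r := r j) (p := r (j + 1))
              (by intro a b ⟨i, hi, h⟩; exact ⟨i, by omega, h⟩) a b hab'
          exact Quotient.sound ((hEr (j + 1) a b).mpr hab'')
        set φ : Quotient (E j) → Quotient (E (j + 1)) :=
          Quotient.lift (fun x => Quotient.mk (E (j + 1)) x) hmono with hφ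
        have hsurj : Function.Surjective φ := by
          intro y
          refine ⟨Quotient.mk (E j) y.out, ?_⟩
          show Quotient.mk (E (j + 1)) y.out = y
          exact y.out_eq
        have hEq : φ (Quotient.mk (E j) (Ps j)) = φ (Quotient.mk (E j) (Qs j)) := by
          show Quotient.mk (E (j + 1)) (Ps j) = Quotient.mk (E (j + 1)) (Qs j)
          exact Quotient.sound ((hEr (j + 1) _ _).mpr
            (Relation.EqvGen.rel _ _ ⟨j, by omega, rfl, rfl⟩))
        have hne : Quotient.mk (E j) (Ps j) ≠ Quotient.mk (E j) (Qs j) := by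
          intro h
          exact factB j (by omega)
            (factD j (by omega) _ _ ((hEr j _ _).mp (Quotient.exact h)))
        have hlt : Nat.card (Quotient (E (j + 1))) < Nat.card (Quotient (E j)) := by
          letI : Fintype (Quotient (E j)) := Fintype.ofFinite _
          letI : Fintype (Quotient (E (j + 1))) := Fintype.ofFinite _
          rw [Nat.card_eq_fintype_card, Nat.card_eq_fintype_card]
          exact Fintype.card_lt_of_surjective_not_injective φ hsurj
            (fun hinj => hne (hinj hEq))
        have h3 := ih (by omega)
        omega
    have hcn : Nat.card (Quotient (E (k + 1))) + (k + 1) ≤ n := factE (k + 1) le_rfl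
    set ρ : Fin n → Fin n := fun x => (Quotient.mk (E (k + 1)) x).out with hρ
    have hρ1 : ∀ x : Fin n, (E (k + 1)).r (ρ x) x :=
      fun x => @Quotient.mk_out _ (E (k + 1)) x
    have hconst : ∀ F : Finset (Fin n), iEquiv δ (↑F) k p q →
        ∀ x y : Fin n, (E (k + 1)).r x y → (x ∈ F ↔ y ∈ F) := by
      intro F hF x y h
      have h' : Relation.EqvGen (r (k + 1)) x y := (hEr (k + 1) x y).mp h
      clear h
      induction h' with
      | rel a b hab =>
        obtain ⟨i, hi, rfl, rfl⟩ := hab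
        exact factA F hF i (by omega)
      | refl a => exact Iff.rfl
      | symm a b _ ih => exact ih.symm
      | trans a b c _ _ ih1 ih2 => exact ih1.trans ih2
    have key : ∀ F : Finset (Fin n), iEquiv δ (↑F) k p q →
        ∀ x : Fin n, (x ∈ F ↔ ρ x ∈ F.image ρ) := by
      intro F hF x
      constructor
      · exact fun hx => Finset.mem_image_of_mem ρ hx
      · intro hx
        obtain ⟨y, hy, hxy⟩ := Finset.mem_image.mp hx
        have hEyx : (E (k + 1)).r y x := by
          have t1 := hρ1 y
          have t2 := hρ1 x
          rw [hxy] at t1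
          exact (E (k + 1)).iseqv.trans ((E (k + 1)).iseqv.symm t1) t2
        exact (hconst F hF y x hEyx).mp hy
    have hinj : Set.InjOn (fun F : Finset (Fin n) => F.image ρ) ↑Bad := by
      intro F1 h1 F2 h2 hEq12
      have h1' : iEquiv δ (↑F1) k p q :=
        ((Finset.mem_filter.mp (Finset.mem_coe.mp h1)).2).1
      have h2' : iEquiv δ (↑F2) k p q :=
        ((Finset.mem_filter.mp (Finset.mem_coe.mp h2)).2).1
      ext x
      rw [key F1 h1' x, key F2 h2' x]
      simp only at hEq12
      rw [hEq12]
    have hRcard : (Finset.univ.image ρ).card = Nat.card (Quotient (E (k + 1))) := by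
      letI : Fintype (Quotient (E (k + 1))) := Fintype.ofFinite _
      letI : DecidableEq (Quotient (E (k + 1))) := Classical.decEq _
      have h1 : (Finset.univ.image (Quotient.mk (E (k + 1)))).image Quotient.out
          = Finset.univ.image ρ := by
        rw [Finset.image_image]
        rfl
      rw [← h1, Finset.image_univ_of_surjective (fun y => ⟨y.out, y.out_eq⟩),
        Finset.card_image_of_injective _ Quotient.out_injective,
        Nat.card_eq_fintype_card, Finset.card_univ]
    have hcard1 : Bad.card ≤ 2 ^ Nat.card (Quotient (E (k + 1))) := by
      calc Bad.card = (Bad.image (fun F => F.image ρ)).card :=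
            (Finset.card_image_of_injOn hinj).symm
        _ ≤ ((Finset.univ.image ρ).powerset).card := by
            apply Finset.card_le_card
            intro G hG
            obtain ⟨F, _, rfl⟩ := Finset.mem_image.mp hG
            rw [Finset.mem_powerset]
            exact Finset.image_subset_image (Finset.subset_univ F)
        _ = 2 ^ (Finset.univ.image ρ).card := Finset.card_powerset _
        _ = 2 ^ Nat.card (Quotient (E (k + 1))) := by rw [hRcard]
    calc Bad.card * 2 ^ (k + 1)
        ≤ 2 ^ Nat.card (Quotient (E (k + 1))) * 2 ^ (k + 1) :=
          Nat.mul_le_mul_right _ hcard1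
      _ = 2 ^ (Nat.card (Quotient (E (k + 1))) + (k + 1)) := (pow_add 2 _ _).symm
      _ ≤ 2 ^ n := Nat.pow_le_pow_right (by norm_num) hcn

end aux

theorem stmt10 :
    ∃ C > (0 : ℝ), ∀ n : ℕ, 2 ≤ n → ∀ (A : Type) (δ : Fin n → A → Fin n),
      (∑ F : Finset (Fin n), (mooreCount δ (↑F : Set (Fin n)) : ℝ)) / 2 ^ n
          ≤ (⌈5 * Real.logb 2 n⌉₊ : ℝ) + (n : ℝ) ^ 5 / 2 ^ (⌈5 * Real.logb 2 n⌉₊ : ℕ) ∧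
      (∑ F : Finset (Fin n), (mooreCount δ (↑F : Set (Fin n)) : ℝ)) / 2 ^ n
          ≤ C * Real.log n := by
  have hlog2 : (0 : ℝ) < Real.log 2 := Real.log_pos (by norm_num)
  refine ⟨7 / Real.log 2, by positivity, ?_⟩
  intro n hn A δ
  classical
  set ℓ := ⌈5 * Real.logb 2 (n : ℝ)⌉₊ with hℓdef
  have hn0 : (0 : ℝ) < n := by
    have : (2 : ℝ) ≤ n := by exact_mod_cast hn
    linarith
  have hlogb1 : (1 : ℝ) ≤ Real.logb 2 n := by
    have h1 : Real.logb 2 2 ≤ Real.logb 2 n :=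
      Real.logb_le_logb_of_le (by norm_num) (by norm_num) (by exact_mod_cast hn)
    rwa [Real.logb_self_eq_one (by norm_num)] at h1
  have hℓ5 : 5 ≤ ℓ := by
    have h1 : (5 : ℝ) ≤ 5 * Real.logb 2 n := by nlinarith
    have h2 := Nat.ceil_le_ceil (R := ℝ) h1
    simpa using h2
  have hℓ1 : 1 ≤ ℓ := by omega
  set Bad := Finset.univ.filter (fun F : Finset (Fin n) => ℓ < mooreCount δ (↑F)) with hB
  -- natural number bounds
  have hsumN : (∑ F : Finset (Fin n), mooreCount δ (↑F)) ≤ 2 ^ n * ℓ + Bad.card * (1 + n ^ 2) := by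
    rw [← Finset.sum_filter_add_sum_filter_not Finset.univ
      (fun F : Finset (Fin n) => ℓ < mooreCount δ (↑F)) (fun F => mooreCount δ (↑F))]
    have h1 : (∑ F ∈ Bad, mooreCount δ (↑F)) ≤ Bad.card * (1 + n ^ 2) := by
      have := Finset.sum_le_card_nsmul Bad (fun F => mooreCount δ (↑F)) (1 + n ^ 2)
        (fun F _ => moore_le δ (↑F))
      simpa [smul_eq_mul] using this
    have h2 : (∑ F ∈ Finset.univ.filter
        (fun F : Finset (Fin n) => ¬ ℓ < mooreCount δ (↑F)), mooreCount δ (↑F))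
        ≤ 2 ^ n * ℓ := by
      have hstep := Finset.sum_le_card_nsmul
        (Finset.univ.filter (fun F : Finset (Fin n) => ¬ ℓ < mooreCount δ (↑F)))
        (fun F => mooreCount δ (↑F)) ℓ
        (fun F hF => by
          have := (Finset.mem_filter.mp hF).2
          show mooreCount δ (↑F) ≤ ℓ
          omega)
      have hcardle : (Finset.univ.filter
          (fun F : Finset (Fin n) => ¬ ℓ < mooreCount δ (↑F))).card ≤ 2 ^ n := by
        calc (Finset.univ.filter
            (fun F : Finset (Fin n) => ¬ ℓ < mooreCount δ (↑F))).card
            ≤ (Finset.univ : Finset (Finset (Fin n))).card := Finset.card_filter_le _ _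
          _ = 2 ^ n := by simp [Finset.card_univ]
      calc (∑ F ∈ Finset.univ.filter
          (fun F : Finset (Fin n) => ¬ ℓ < mooreCount δ (↑F)), mooreCount δ (↑F))
          ≤ (Finset.univ.filter
            (fun F : Finset (Fin n) => ¬ ℓ < mooreCount δ (↑F))).card * ℓ := by
            simpa [smul_eq_mul] using hstep
        _ ≤ 2 ^ n * ℓ := Nat.mul_le_mul_right _ hcardle
    rw [← hB]
    omega
  have hbadN : Bad.card * 2 ^ ℓ ≤ n ^ 2 * 2 ^ n := by
    have hsub : Bad ⊆ (Finset.univ : Finset (Fin n × Fin n)).biUnion (fun z =>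
        Finset.univ.filter (fun F : Finset (Fin n) =>
          iEquiv δ (↑F) (ℓ - 1) z.1 z.2 ∧ ¬ iEquiv δ (↑F) ((ℓ - 1) + 1) z.1 z.2)) := by
      intro F hF
      have hmo := (Finset.mem_filter.mp hF).2
      obtain ⟨p, q, h1, h2⟩ := moore_gt δ (↑F) hℓ1 hmo
      refine Finset.mem_biUnion.mpr ⟨(p, q), Finset.mem_univ _,
        Finset.mem_filter.mpr ⟨Finset.mem_univ _, h1, ?_⟩⟩
      rwa [Nat.sub_add_cancel hℓ1]
    have h1 : Bad.card ≤ ∑ z : Fin n × Fin n, (Finset.univ.filter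
        (fun F : Finset (Fin n) =>
          iEquiv δ (↑F) (ℓ - 1) z.1 z.2 ∧ ¬ iEquiv δ (↑F) ((ℓ - 1) + 1) z.1 z.2)).card :=
      le_trans (Finset.card_le_card hsub) Finset.card_biUnion_le
    calc Bad.card * 2 ^ ℓ
        ≤ (∑ z : Fin n × Fin n, (Finset.univ.filter
            (fun F : Finset (Fin n) =>
              iEquiv δ (↑F) (ℓ - 1) z.1 z.2 ∧ ¬ iEquiv δ (↑F) ((ℓ - 1) + 1) z.1 z.2)).card)
          * 2 ^ ℓ := Nat.mul_le_mul_right _ h1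
      _ = ∑ z : Fin n × Fin n, (Finset.univ.filter
            (fun F : Finset (Fin n) =>
              iEquiv δ (↑F) (ℓ - 1) z.1 z.2 ∧ ¬ iEquiv δ (↑F) ((ℓ - 1) + 1) z.1 z.2)).card
          * 2 ^ ℓ := Finset.sum_mul ..
      _ ≤ ∑ _z : Fin n × Fin n, 2 ^ n := by
          apply Finset.sum_le_sum
          intro z _
          have hbc := bad_card δ (ℓ - 1) z.1 z.2
          have hrw : ℓ - 1 + 1 = ℓ := Nat.sub_add_cancel hℓ1
          rw [hrw] at hbc ⊢
          exact hbc
      _ = n ^ 2 * 2 ^ n := by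
          simp only [Finset.sum_const, Finset.card_univ, Fintype.card_prod,
            Fintype.card_fin, smul_eq_mul]
          ring
  -- pass to the reals
  have h2n : (0 : ℝ) < 2 ^ n := by positivity
  have h2ℓ : (0 : ℝ) < (2 : ℝ) ^ ℓ := by positivity
  have hsumR : (∑ F : Finset (Fin n), (mooreCount δ (↑F : Set (Fin n)) : ℝ))
      ≤ 2 ^ n * ℓ + Bad.card * (1 + (n : ℝ) ^ 2) := by
    exact_mod_cast hsumN
  have hbadR : (Bad.card : ℝ) * 2 ^ ℓ ≤ (n : ℝ) ^ 2 * 2 ^ n := by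
    exact_mod_cast hbadN
  have hnR : (2 : ℝ) ≤ n := by exact_mod_cast hn
  have hn1 : (1 : ℝ) ≤ (n : ℝ) := by linarith
  have h24 : (n : ℝ) ^ 2 ≤ (n : ℝ) ^ 4 := pow_le_pow_right₀ hn1 (by norm_num)
  have h45 : 2 * (n : ℝ) ^ 4 ≤ (n : ℝ) ^ 5 := by
    have he : (n : ℝ) ^ 5 = (n : ℝ) * (n : ℝ) ^ 4 := by ring
    rw [he]
    exact mul_le_mul_of_nonneg_right hnR (by positivity)
  have hn5 : ((n : ℝ) ^ 2) * (1 + (n : ℝ) ^ 2) ≤ (n : ℝ) ^ 5 := by nlinarith [h24, h45]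
  have hB5 : (Bad.card : ℝ) * (1 + (n : ℝ) ^ 2) ≤ ((n : ℝ) ^ 5 / 2 ^ ℓ) * 2 ^ n := by
    have e1 : (Bad.card : ℝ) * (1 + (n : ℝ) ^ 2) * 2 ^ ℓ ≤ (n : ℝ) ^ 5 * 2 ^ n := by
      calc (Bad.card : ℝ) * (1 + (n : ℝ) ^ 2) * 2 ^ ℓ
          = ((Bad.card : ℝ) * 2 ^ ℓ) * (1 + (n : ℝ) ^ 2) := by ring
        _ ≤ ((n : ℝ) ^ 2 * 2 ^ n) * (1 + (n : ℝ) ^ 2) := by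
            apply mul_le_mul_of_nonneg_right hbadR
            positivity
        _ = ((n : ℝ) ^ 2 * (1 + (n : ℝ) ^ 2)) * 2 ^ n := by ring
        _ ≤ (n : ℝ) ^ 5 * 2 ^ n := by
            apply mul_le_mul_of_nonneg_right hn5
            positivity
    have e2 : (Bad.card : ℝ) * (1 + (n : ℝ) ^ 2) ≤ (n : ℝ) ^ 5 * 2 ^ n / 2 ^ ℓ :=
      (le_div_iff₀ h2ℓ).mpr e1
    calc (Bad.card : ℝ) * (1 + (n : ℝ) ^ 2) ≤ (n : ℝ) ^ 5 * 2 ^ n / 2 ^ ℓ := e2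
      _ = ((n : ℝ) ^ 5 / 2 ^ ℓ) * 2 ^ n := by ring
  have hmain : (∑ F : Finset (Fin n), (mooreCount δ (↑F : Set (Fin n)) : ℝ)) / 2 ^ n
      ≤ (ℓ : ℝ) + (n : ℝ) ^ 5 / 2 ^ ℓ := by
    rw [div_le_iff₀ h2n]
    calc (∑ F : Finset (Fin n), (mooreCount δ (↑F : Set (Fin n)) : ℝ))
        ≤ 2 ^ n * ℓ + Bad.card * (1 + (n : ℝ) ^ 2) := hsumR
      _ ≤ 2 ^ n * ℓ + ((n : ℝ) ^ 5 / 2 ^ ℓ) * 2 ^ n := by linarith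
      _ = ((ℓ : ℝ) + (n : ℝ) ^ 5 / 2 ^ ℓ) * 2 ^ n := by ring
  refine ⟨hmain, hmain.trans ?_⟩
  -- second part : ℓ + n^5 / 2^ℓ ≤ (7 / log 2) * log n
  have h5pow : (n : ℝ) ^ 5 ≤ (2 : ℝ) ^ ℓ := by
    have e1 : (2 : ℝ) ^ (Real.logb 2 n * 5) = (n : ℝ) ^ (5 : ℕ) := by
      rw [Real.rpow_mul (by norm_num : (0 : ℝ) ≤ 2),
        Real.rpow_logb (by norm_num) (by norm_num) hn0]
      rw [← Real.rpow_natCast (n : ℝ) 5]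
      norm_num
    have e2 : Real.logb 2 n * 5 ≤ (ℓ : ℝ) := by
      have := Nat.le_ceil (5 * Real.logb 2 (n : ℝ))
      rw [← hℓdef] at this
      linarith
    calc (n : ℝ) ^ 5 = (2 : ℝ) ^ (Real.logb 2 n * 5) := e1.symm
      _ ≤ (2 : ℝ) ^ ((ℓ : ℕ) : ℝ) :=
        (Real.rpow_le_rpow_left_iff (by norm_num : (1 : ℝ) < 2)).mpr e2
      _ = (2 : ℝ) ^ ℓ := Real.rpow_natCast 2 ℓ
  have hD1 : (n : ℝ) ^ 5 / 2 ^ ℓ ≤ 1 := (div_le_one h2ℓ).mpr h5pow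
  have hℓup : (ℓ : ℝ) ≤ 5 * Real.logb 2 n + 1 := by
    have h0 : (0 : ℝ) ≤ 5 * Real.logb 2 (n : ℝ) := by linarith
    have := Nat.ceil_lt_add_one h0
    rw [← hℓdef] at this
    linarith
  have hlogn : Real.log n = Real.log 2 * Real.logb 2 n := by
    rw [Real.logb]
    field_simp
  rw [hlogn]
  have hrw : 7 / Real.log 2 * (Real.log 2 * Real.logb 2 n) = 7 * Real.logb 2 n := by
    field_simp
  rw [hrw]
  linarith
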